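/- Let G = SL₃(K_ν), Γ = SL₃(O_ν), Ω = G/Γ, and d(t) = diag(t,1,t⁻¹). Let y ∈ Ω be such that the orbit Dy under D = {d(t) : t ∈ K_ν^×} is relatively compact in Ω. Then the stabilizer of y in G intersects the group W of upper triangular unipotent matrices only in the identity. Consequently, for every non-compact closed subgroup U of W, the orbit map U → Uy is not proper, i.e. U/(U ∩ G_y) is not compact. -/

import Mathlib

set_option synthInstance.maxHeartbeats 800000
set_option maxHeartbeats 1000000

open Topology

noncomputable section

abbrev Kv (F : Type) [Field F] := LaurentSeries F

abbrev SL3 (F : Type) [Field F] := Matrix.SpecialLinearGroup (Fin 3) (Kv F)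

instance (F : Type) [Field F] : TopologicalSpace (SL3 F) := instTopologicalSpaceSubtype

def theta (F : Type) [Field F] : Kv F := HahnSeries.single (-1) 1

def polyMap (F : Type) [Field F] : Polynomial F →+* Kv F :=
  (Polynomial.aeval (theta F)).toRingHom

def Gamma (F : Type) [Field F] : Subgroup (SL3 F) :=
  (Matrix.SpecialLinearGroup.map (polyMap F)).range

/-- Membership in the group `W` of upper triangular unipotent matrices. -/
def IsUpperUnip (F : Type) [Field F] (g : SL3 F) : Prop :=
  g.1 0 0 = 1 ∧ g.1 1 1 = 1 ∧ g.1 2 2 = 1 ∧ g.1 1 0 = 0 ∧ g.1 2 0 = 0 ∧ g.1 2 1 = 0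

/-!
Let `γ` fix `y = xΓ` with `d γ d⁻¹ → 1` along diagonal elements `d = diag(tⁿ, 1, t⁻ⁿ)`; this
holds for every upper unipotent `γ` once `t → 0`. Take a cluster point `gΓ` of the points `d y`
and lifts `c` of them close to `g`. Then `c⁻¹ (d γ d⁻¹) c` is a `Γ`-conjugate of `x⁻¹ γ x`, hence
lies in `Γ`, and is close to `1`; by discreteness of `Γ` it equals `1`, so `γ = 1`. Discreteness
of `Γ = SL₃(F[θ])` holds because a nonzero polynomial in `θ = X⁻¹` has valuation at least `1`.
Once `U ∩ G_y` is trivial, `U → U/(U ∩ G_y)` is a homeomorphism, so a compact quotient would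
make `U` compact.
-/

open Filter

section TopologicalGroup

variable {G : Type*} [Group G] [TopologicalSpace G] [IsTopologicalGroup G]

theorem eq_one_of_tendsto_conj_of_mapClusterPt {Γ : Subgroup G} [DiscreteTopology Γ]
    {ι : Type*} {l : Filter ι} {d : ι → G} {γ : G} {y z : G ⧸ Γ} (hγ : γ • y = y)
    (hd : Tendsto (fun i => d i * γ * (d i)⁻¹) l (𝓝 1))
    (hz : MapClusterPt z l (fun i => d i • y)) : γ = 1 := by
  obtain ⟨x, rfl⟩ := QuotientGroup.mk_surjective y
  obtain ⟨g, rfl⟩ := QuotientGroup.mk_surjective z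
  obtain ⟨V, hV, hVΓ⟩ := nhds_inter_eq_singleton_of_mem_discrete
    (isDiscrete_iff_discreteTopology.mpr ‹_›) Γ.one_mem
  have hconj : Tendsto (fun p : G × G => p.1⁻¹ * p.2 * p.1) (𝓝 g ×ˢ 𝓝 1) (𝓝 1) := by
    rw [← nhds_prod_eq]
    exact ((continuous_fst.inv.mul continuous_snd).mul continuous_fst).tendsto' _ _ (by simp)
  obtain ⟨U, hU, W, hW, hUW⟩ := mem_prod_iff.mp (hconj hV)
  have hUΓ : (QuotientGroup.mk '' U : Set (G ⧸ Γ)) ∈ 𝓝 (g : G ⧸ Γ) :=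
    QuotientGroup.isOpenMap_coe.image_mem_nhds hU
  obtain ⟨i, ⟨c, hcU, hc⟩, hiW⟩ := ((hz.frequently hUΓ).and_eventually (hd hW)).exists
  have hcΓ : c⁻¹ * (d i * x) ∈ Γ := QuotientGroup.eq.mp hc
  have hxΓ : x⁻¹ * γ * x ∈ Γ := by
    simpa [mul_assoc] using QuotientGroup.eq.mp hγ.symm
  have hδΓ : c⁻¹ * (d i * γ * (d i)⁻¹) * c ∈ Γ := by
    convert Γ.mul_mem (Γ.mul_mem hcΓ hxΓ) (Γ.inv_mem hcΓ) using 1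
    group
  have hδ : c⁻¹ * (d i * γ * (d i)⁻¹) * c = 1 :=
    hVΓ.subset ⟨hUW (Set.mk_mem_prod hcU hiW), hδΓ⟩
  calc γ = (c⁻¹ * d i)⁻¹ * (c⁻¹ * (d i * γ * (d i)⁻¹) * c) * (c⁻¹ * d i) := by group
    _ = 1 := by rw [hδ]; group

theorem compactSpace_of_compactSpace_quotient_of_eq_bot {H : Subgroup G} (hH : H = ⊥)
    [CompactSpace (G ⧸ H)] : CompactSpace G := by
  subst hH
  have hinj : Function.Injective (QuotientGroup.mk : G → G ⧸ (⊥ : Subgroup G)) :=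
    fun a b hab => by simpa [inv_mul_eq_one] using QuotientGroup.eq.mp hab
  let e : G ≃ₜ G ⧸ (⊥ : Subgroup G) := Equiv.toHomeomorphOfContinuousOpen
    (Equiv.ofBijective _ ⟨hinj, QuotientGroup.mk_surjective⟩) continuous_quotient_mk'
    QuotientGroup.isOpenMap_coe
  exact e.symm.compactSpace

end TopologicalGroup

namespace SL3

variable {F : Type} [Field F]

instance : IsTopologicalGroup (SL3 F) := Matrix.SpecialLinearGroup.topologicalGroup

theorem polyMap_monomial (k : ℕ) (a : F) :
    polyMap F (Polynomial.monomial k a) = HahnSeries.single (-(k : ℤ)) a := by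
  simp [polyMap, theta, HahnSeries.single_pow, Polynomial.aeval_monomial,
    HahnSeries.algebraMap_apply', HahnSeries.single_mul_single]

theorem coeff_polyMap_neg_natCast (p : Polynomial F) (n : ℕ) :
    (polyMap F p).coeff (-n) = p.coeff n := by
  induction p using Polynomial.induction_on' with
  | add p q hp hq => simp [hp, hq]
  | monomial k a =>
    rw [polyMap_monomial, HahnSeries.coeff_single, Polynomial.coeff_monomial]
    simp [eq_comm]

theorem eq_zero_of_valuation_polyMap_lt_one {p : Polynomial F}
    (hp : Valued.v (polyMap F p) < 1) : p = 0 := by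
  have hp' : Valued.v (polyMap F p) ≤ WithZero.exp (-1 : ℤ) := by
    rwa [← WithZero.lt_mul_exp_iff_le WithZero.exp_ne_zero, ← WithZero.exp_add, neg_add_cancel]
  ext n
  rw [← coeff_polyMap_neg_natCast, Polynomial.coeff_zero]
  exact LaurentSeries.coeff_zero_of_lt_valuation F hp' (by omega)

theorem eq_one_of_mem_gamma {δ : SL3 F} (hδ : δ ∈ Gamma F)
    (hv : ∀ i j, Valued.v (δ i j - (1 : SL3 F) i j) < 1) : δ = 1 := by
  obtain ⟨δ₀, rfl⟩ := hδ
  suffices δ₀ = 1 by rw [this, map_one]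
  refine Subtype.ext (Matrix.ext fun i j => ?_)
  rw [← sub_eq_zero]
  refine eq_zero_of_valuation_polyMap_lt_one ?_
  by_cases hij : i = j <;> simpa [hij, Matrix.one_apply] using hv i j

instance : DiscreteTopology (Gamma F) := by
  refine discreteTopology_of_isOpen_singleton_one (isOpen_singleton_iff_nhds_eq_pure _ |>.mpr ?_)
  refine le_antisymm ?_ (pure_le_nhds _)
  rw [le_pure_iff, mem_nhds_subtype]
  refine ⟨{g | ∀ i j, Valued.v (g i j - (1 : SL3 F) i j) < 1}, ?_,
    fun δ hδ => Subtype.ext (eq_one_of_mem_gamma δ.2 hδ)⟩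
  refine eventually_all.2 fun i => eventually_all.2 fun j => ?_
  have hcont : Continuous fun g : SL3 F => g i j - (1 : SL3 F) i j := by fun_prop
  refine hcont.continuousAt.eventually (p := fun x => Valued.v x < 1) ?_
  simp only [OneMemClass.coe_one, sub_self]
  exact Valued.mem_nhds_zero.mpr ⟨1, fun x hx => by simpa using hx⟩

def diag (t : (Kv F)ˣ) : SL3 F :=
  ⟨!![(t : Kv F), 0, 0; 0, 1, 0; 0, 0, (t : Kv F)⁻¹], by simp [Matrix.det_fin_three]⟩

@[simp]
theorem coe_diag (t : (Kv F)ˣ) :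
    (diag t : Matrix (Fin 3) (Fin 3) (Kv F)) = !![(t : Kv F), 0, 0; 0, 1, 0; 0, 0, (t : Kv F)⁻¹] :=
  rfl

theorem diag_inv (t : (Kv F)ˣ) : (diag t)⁻¹ = diag t⁻¹ := by
  refine inv_eq_of_mul_eq_one_right (Subtype.ext (Matrix.ext fun i j => ?_))
  fin_cases i <;> fin_cases j <;> simp [Matrix.mul_apply, Fin.sum_univ_three]

theorem coe_diag_mul_mul_inv_of_isUpperUnip (t : (Kv F)ˣ) {g : SL3 F} (hg : IsUpperUnip F g) :
    ((diag t * g * (diag t)⁻¹ : SL3 F) : Matrix (Fin 3) (Fin 3) (Kv F)) =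
      !![1, t * g 0 1, t * g 0 2 * t; 0, 1, g 1 2 * t; 0, 0, 1] := by
  obtain ⟨h00, h11, h22, h10, h20, h21⟩ := hg
  ext i j
  simp only [Matrix.SpecialLinearGroup.coe_mul, diag_inv, coe_diag]
  fin_cases i <;> fin_cases j <;>
    simp [Matrix.mul_apply, Matrix.vecMul, dotProduct, Fin.sum_univ_three,
      h00, h11, h22, h10, h20, h21]

theorem tendsto_diag_mul_mul_inv_of_isUpperUnip {ι : Type*} {l : Filter ι} {s : ι → (Kv F)ˣ}
    (hs : Tendsto (fun i => (s i : Kv F)) l (𝓝 0)) {g : SL3 F} (hg : IsUpperUnip F g) :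
    Tendsto (fun i => diag (s i) * g * (diag (s i))⁻¹) l (𝓝 1) := by
  refine tendsto_subtype_rng.mpr ?_
  simp only [coe_diag_mul_mul_inv_of_isUpperUnip _ hg, Matrix.SpecialLinearGroup.coe_one,
    Matrix.one_fin_three]
  refine tendsto_pi_nhds.2 fun a => tendsto_pi_nhds.2 fun b => ?_
  fin_cases a <;> fin_cases b <;> simp
  exacts [tendsto_const_nhds, by simpa using hs.mul_const _,
    by simpa using (hs.mul_const _).mul hs, tendsto_const_nhds, tendsto_const_nhds,
    by simpa using hs.const_mul _, tendsto_const_nhds, tendsto_const_nhds, tendsto_const_nhds]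

theorem exists_unit_tendsto_pow_zero :
    ∃ t : (Kv F)ˣ, Tendsto (fun n : ℕ => ((t ^ n : (Kv F)ˣ) : Kv F)) atTop (𝓝 0) := by
  refine ⟨Units.mk0 (HahnSeries.single 1 1) (HahnSeries.single_ne_zero one_ne_zero), ?_⟩
  simp only [Units.val_pow_eq_pow_val, Units.val_mk0]
  exact Valued.tendsto_zero_pow_of_le_exp_neg_one (LaurentSeries.valuation_single_zpow F 1).le

end SL3

open SL3

theorem stmt_7_general (F : Type) [Field F]
    (y : SL3 F ⧸ Gamma F)
    (hD : IsCompact (closure {z : SL3 F ⧸ Gamma F | ∃ g : SL3 F,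
      (∃ t : Kv F, t ≠ 0 ∧ g.1 = !![t, 0, 0; 0, 1, 0; 0, 0, t⁻¹]) ∧ z = g • y})) :
    (∀ g : SL3 F, IsUpperUnip F g → g • y = y → g = 1) ∧
      (∀ U : Subgroup (SL3 F), IsClosed (U : Set (SL3 F)) →
        (∀ u ∈ U, IsUpperUnip F u) → ¬ IsCompact (U : Set (SL3 F)) →
        ¬ CompactSpace
          (↥U ⧸ (MulAction.stabilizer (SL3 F) y).subgroupOf U)) := by
  obtain ⟨t, ht⟩ := exists_unit_tendsto_pow_zero (F := F)
  have hW : ∀ g : SL3 F, IsUpperUnip F g → g • y = y → g = 1 := by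
    intro g hg hgy
    obtain ⟨z, -, hz⟩ := hD.exists_mapClusterPt (f := atTop) (u := fun n : ℕ => diag (t ^ n) • y)
      (le_principal_iff.mpr <| mem_map.mpr <| Eventually.of_forall fun n =>
        subset_closure ⟨diag (t ^ n), ⟨_, Units.ne_zero _, rfl⟩, rfl⟩)
    exact eq_one_of_tendsto_conj_of_mapClusterPt hgy
      (tendsto_diag_mul_mul_inv_of_isUpperUnip ht hg) hz
  refine ⟨hW, fun U _ hUW hU hcpt => hU ?_⟩
  have hbot : (MulAction.stabilizer (SL3 F) y).subgroupOf U = ⊥ :=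
    eq_bot_iff.mpr fun u hu => Subtype.ext (hW u (hUW u u.2) (Subgroup.mem_subgroupOf.mp hu))
  exact isCompact_iff_compactSpace.mpr (compactSpace_of_compactSpace_quotient_of_eq_bot (G := U) hbot)

/-- If the `D`-orbit of `y` is relatively compact, then the stabilizer of `y` meets the
upper triangular unipotent group `W` only in the identity, and for every non-compact closed
subgroup `U ⊆ W` the quotient `U/(U ∩ G_y)` is not compact. -/
theorem stmt_7 (F : Type) [Field F] [Fintype F] (hodd : ringChar F ≠ 2)
    (y : SL3 F ⧸ Gamma F)
    (hD : IsCompact (closure {z : SL3 F ⧸ Gamma F | ∃ g : SL3 F,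
      (∃ t : Kv F, t ≠ 0 ∧ g.1 = !![t, 0, 0; 0, 1, 0; 0, 0, t⁻¹]) ∧ z = g • y})) :
    (∀ g : SL3 F, IsUpperUnip F g → g • y = y → g = 1) ∧
      (∀ U : Subgroup (SL3 F), IsClosed (U : Set (SL3 F)) →
        (∀ u ∈ U, IsUpperUnip F u) → ¬ IsCompact (U : Set (SL3 F)) →
        ¬ CompactSpace
          (↥U ⧸ (MulAction.stabilizer (SL3 F) y).subgroupOf U)) :=
  stmt_7_general F y hD

end
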